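/- Let γ(s) = φ(u(s), v(s)) be a unit-speed rectifying curve on a regular surface patch φ, with γ = λ t + μ b, curvature k > 0, and N the unit normal to the surface. Then the normal component of the position vector satisfies γ(s)·(φ_u × φ_v) = (μ(s)/k(s)) [ (u'v'' - u''v')(EG - F²) + u'³(E(φ_uu·φ_v) - F(φ_uu·φ_u)) + 2u'²v'(E(φ_uv·φ_v) - F(φ_uv·φ_u)) + u'v'²(E(φ_vv·φ_v) - F(φ_vv·φ_u)) + u'²v'(F(φ_uu·φ_v) - G(φ_uu·φ_u)) + 2u'v'²(F(φ_uv·φ_v) - G(φ_uv·φ_u)) + v'³(F(φ_vv·φ_v) - G(φ_vv·φ_u)) ]. -/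

import Mathlib

noncomputable section

open scoped RealInnerProductSpace
open Set
open scoped ContDiff

/-- `ℝ³` as a Euclidean space. -/
abbrev E3 : Type := EuclideanSpace ℝ (Fin 3)

/-- The cross product on `ℝ³`. -/
def cross3 (x y : E3) : E3 :=
  WithLp.toLp 2 ![x 1 * y 2 - x 2 * y 1, x 2 * y 0 - x 0 * y 2, x 0 * y 1 - x 1 * y 0]

/-- A `3 × 3` matrix acting on `ℝ³`. -/
def matVec (A : Matrix (Fin 3) (Fin 3) ℝ) (x : E3) : E3 :=
  WithLp.toLp 2 (fun i => ∑ j, A i j * x j)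

lemma inner_E3 (x y : E3) : ⟪x, y⟫ = x 0 * y 0 + x 1 * y 1 + x 2 * y 2 := by
  simp [PiLp.inner_apply, Fin.sum_univ_three, mul_comm]

lemma cross3_quad (a b c d : E3) :
    ⟪cross3 a b, cross3 c d⟫ = ⟪a,c⟫*⟪b,d⟫ - ⟪a,d⟫*⟪b,c⟫ := by
  simp [inner_E3, cross3, Fin.sum_univ_three]; ring

lemma inner_cross_self_left (a b : E3) : ⟪a, cross3 a b⟫ = 0 := by
  simp [inner_E3, cross3, Fin.sum_univ_three]; ring

lemma inner_cross_self_right (a b : E3) : ⟪b, cross3 a b⟫ = 0 := by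
  simp [inner_E3, cross3, Fin.sum_univ_three]; ring

section Helpers
variable {F : Type*} [NormedAddCommGroup F] [NormedSpace ℝ F]




lemma partial_fst' {Φ : ℝ × ℝ → F} (h : Differentiable ℝ Φ) (x y : ℝ) :
    deriv (fun w => Φ (w, y)) x = fderiv ℝ Φ (x, y) (1, 0) := by
  have h1 : HasDerivAt (fun w : ℝ => (w, y)) ((1 : ℝ), (0 : ℝ)) x :=
    (hasDerivAt_id x).prodMk (hasDerivAt_const x y)
  exact (((h (x, y)).hasFDerivAt).comp_hasDerivAt x h1).deriv

lemma partial_snd' {Φ : ℝ × ℝ → F} (h : Differentiable ℝ Φ) (x y : ℝ) :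
    deriv (fun w => Φ (x, w)) y = fderiv ℝ Φ (x, y) (0, 1) := by
  have h1 : HasDerivAt (fun w : ℝ => (x, w)) ((0 : ℝ), (1 : ℝ)) y :=
    (hasDerivAt_const y x).prodMk (hasDerivAt_id y)
  exact (((h (x, y)).hasFDerivAt).comp_hasDerivAt y h1).deriv

lemma chain2' {Φ : ℝ × ℝ → F} (h : Differentiable ℝ Φ) {u v : ℝ → ℝ}
    (hu : Differentiable ℝ u) (hv : Differentiable ℝ v) (s : ℝ) :
    HasDerivAt (fun s => Φ (u s, v s))
      (deriv u s • fderiv ℝ Φ (u s, v s) (1, 0) + deriv v s • fderiv ℝ Φ (u s, v s) (0, 1)) s := by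
  have h1 : HasDerivAt (fun s => (u s, v s)) (deriv u s, deriv v s) s :=
    (hu s).hasDerivAt.prodMk (hv s).hasDerivAt
  have h2 := ((h (u s, v s)).hasFDerivAt).comp_hasDerivAt s h1
  convert h2 using 1
  · rfl
  have : (deriv u s, deriv v s) = deriv u s • ((1:ℝ),(0:ℝ)) + deriv v s • ((0:ℝ),(1:ℝ)) := by
    simp [Prod.ext_iff]
  rw [this, map_add, map_smul, map_smul]

lemma fderiv_eval_eq {N : ℝ × ℝ → (ℝ × ℝ) →L[ℝ] F} (hN : Differentiable ℝ N)
    (e : ℝ × ℝ) (p w : ℝ × ℝ) :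
    fderiv ℝ (fun q => N q e) p w = fderiv ℝ N p w e := by
  have h1 : HasFDerivAt (fun q => N q e)
      ((ContinuousLinearMap.apply ℝ F e).comp (fderiv ℝ N p)) p :=
    ((ContinuousLinearMap.apply ℝ F e).hasFDerivAt).comp p (hN p).hasFDerivAt
  rw [h1.fderiv]
  rfl

lemma diff_eval {N : ℝ × ℝ → (ℝ × ℝ) →L[ℝ] F} (hN : Differentiable ℝ N) (e : ℝ × ℝ) :
    Differentiable ℝ (fun q => N q e) :=
  fun p => ((ContinuousLinearMap.apply ℝ F e).differentiable.comp hN) p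

lemma symm2' {Φ : ℝ × ℝ → F} (h : ContDiff ℝ ∞ Φ) (p a b : ℝ × ℝ) :
    fderiv ℝ (fderiv ℝ Φ) p a b = fderiv ℝ (fderiv ℝ Φ) p b a := by
  have hd : Differentiable ℝ Φ := h.differentiable (by simp)
  have hF : ContDiff ℝ ∞ (fderiv ℝ Φ) := (contDiff_infty_iff_fderiv.mp (h.of_le le_rfl)).2
  exact second_derivative_symmetric (fun y => (hd y).hasFDerivAt)
    ((hF.differentiable (by simp) p).hasFDerivAt) a b

end Helpers


set_option maxHeartbeats 1000000 in
/-- The normal component of the position vector of a unit-speed rectifying curve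
`γ = λ t + μ b` on a regular surface patch, expressed via the first fundamental
form and the derivatives of `(u, v)`. -/
theorem stmt9 (U : Set (ℝ × ℝ)) (hU : IsOpen U)
    (φ : ℝ → ℝ → E3) (hφ : ContDiff ℝ (⊤ : ℕ∞) (fun p : ℝ × ℝ => φ p.1 p.2))
    (φu φv φuu φuv φvv : ℝ → ℝ → E3)
    (hφu : ∀ x y, φu x y = deriv (fun w => φ w y) x)
    (hφv : ∀ x y, φv x y = deriv (fun w => φ x w) y)
    (hφuu : ∀ x y, φuu x y = deriv (fun w => φu w y) x)
    (hφuv : ∀ x y, φuv x y = deriv (fun w => φu x w) y)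
    (hφvv : ∀ x y, φvv x y = deriv (fun w => φv x w) y)
    (hreg : ∀ p ∈ U, LinearIndependent ℝ ![φu p.1 p.2, φv p.1 p.2])
    (α β : ℝ) (u v : ℝ → ℝ) (hu : ContDiff ℝ (⊤ : ℕ∞) u) (hv : ContDiff ℝ (⊤ : ℕ∞) v)
    (hUin : ∀ s ∈ Ioo α β, (u s, v s) ∈ U)
    (γ : ℝ → E3) (hγ : ∀ s, γ s = φ (u s) (v s))
    (hunit : ∀ s ∈ Ioo α β, ‖deriv γ s‖ = 1)
    (k : ℝ → ℝ) (hk : ∀ s, k s = ‖deriv (deriv γ) s‖)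
    (hkpos : ∀ s ∈ Ioo α β, 0 < k s)
    (t n bv : ℝ → E3)
    (ht : ∀ s, t s = deriv γ s)
    (hn : ∀ s, n s = (k s)⁻¹ • deriv (deriv γ) s)
    (hb : ∀ s, bv s = cross3 (t s) (n s))
    (lam mu : ℝ → ℝ)
    (hrect : ∀ s ∈ Ioo α β, γ s = lam s • t s + mu s • bv s) :
    ∀ s ∈ Ioo α β,
      let u' := deriv u s; let v' := deriv v s
      let u'' := deriv (deriv u) s; let v'' := deriv (deriv v) s
      let Pu := φu (u s) (v s); let Pv := φv (u s) (v s)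
      let Puu := φuu (u s) (v s); let Puv := φuv (u s) (v s); let Pvv := φvv (u s) (v s)
      let Ef := ⟪Pu, Pu⟫; let Ff := ⟪Pu, Pv⟫; let Gf := ⟪Pv, Pv⟫
      ⟪γ s, cross3 Pu Pv⟫ =
        (mu s / k s) *
          ((u' * v'' - u'' * v') * (Ef * Gf - Ff ^ 2) +
            u' ^ 3 * (Ef * ⟪Puu, Pv⟫ - Ff * ⟪Puu, Pu⟫) +
            2 * u' ^ 2 * v' * (Ef * ⟪Puv, Pv⟫ - Ff * ⟪Puv, Pu⟫) +
            u' * v' ^ 2 * (Ef * ⟪Pvv, Pv⟫ - Ff * ⟪Pvv, Pu⟫) +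
            u' ^ 2 * v' * (Ff * ⟪Puu, Pv⟫ - Gf * ⟪Puu, Pu⟫) +
            2 * u' * v' ^ 2 * (Ff * ⟪Puv, Pv⟫ - Gf * ⟪Puv, Pu⟫) +
            v' ^ 3 * (Ff * ⟪Pvv, Pv⟫ - Gf * ⟪Pvv, Pu⟫)) := by
  -- setup
  set Φ : ℝ × ℝ → E3 := fun p => φ p.1 p.2 with hΦdef
  have hd : Differentiable ℝ Φ := hφ.differentiable (by simp)
  set N : ℝ × ℝ → (ℝ × ℝ) →L[ℝ] E3 := fderiv ℝ Φ with hNdef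
  have hN : ContDiff ℝ ∞ N := (contDiff_infty_iff_fderiv.mp (hφ.of_le (by simp))).2
  have hNd : Differentiable ℝ N := hN.differentiable (by simp)
  set F2 : ℝ × ℝ → (ℝ × ℝ) →L[ℝ] (ℝ × ℝ) →L[ℝ] E3 := fderiv ℝ N with hF2def
  have hud : Differentiable ℝ u := hu.differentiable (by simp)
  have hvd : Differentiable ℝ v := hv.differentiable (by simp)
  have hu'd : Differentiable ℝ (deriv u) :=
    ((contDiff_infty_iff_deriv.mp (hu.of_le (by simp))).2).differentiable (by simp)
  have hv'd : Differentiable ℝ (deriv v) :=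
    ((contDiff_infty_iff_deriv.mp (hv.of_le (by simp))).2).differentiable (by simp)
  -- first partials
  have hPu : ∀ x y, φu x y = N (x, y) (1, 0) := fun x y => by
    rw [hφu]; exact partial_fst' hd x y
  have hPv : ∀ x y, φv x y = N (x, y) (0, 1) := fun x y => by
    rw [hφv]; exact partial_snd' hd x y
  -- second partials
  have hPuu : ∀ x y, φuu x y = F2 (x, y) (1, 0) (1, 0) := fun x y => by
    rw [hφuu]
    have h1 : (fun w => φu w y) = fun w => N (w, y) (1, 0) := funext fun w => hPu w y
    rw [h1, partial_fst' (diff_eval hNd (1, 0)) x y, fderiv_eval_eq hNd]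
  have hPuv : ∀ x y, φuv x y = F2 (x, y) (0, 1) (1, 0) := fun x y => by
    rw [hφuv]
    have h1 : (fun w => φu x w) = fun w => N (x, w) (1, 0) := funext fun w => hPu x w
    rw [h1, partial_snd' (diff_eval hNd (1, 0)) x y, fderiv_eval_eq hNd]
  have hPvv : ∀ x y, φvv x y = F2 (x, y) (0, 1) (0, 1) := fun x y => by
    rw [hφvv]
    have h1 : (fun w => φv x w) = fun w => N (x, w) (0, 1) := funext fun w => hPv x w
    rw [h1, partial_snd' (diff_eval hNd (0, 1)) x y, fderiv_eval_eq hNd]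
  -- first derivative of γ
  have hγfun : γ = fun s => Φ (u s, v s) := funext fun s => hγ s
  have hγ1 : ∀ s, HasDerivAt γ
      (deriv u s • N (u s, v s) (1, 0) + deriv v s • N (u s, v s) (0, 1)) s := by
    intro s; rw [hγfun]; exact chain2' hd hud hvd s
  have hdγ : ∀ s, deriv γ s = deriv u s • N (u s, v s) (1, 0) + deriv v s • N (u s, v s) (0, 1) :=
    fun s => (hγ1 s).deriv
  -- second derivative of γ
  have hγ2 : ∀ s, deriv (deriv γ) s =
      deriv (deriv u) s • N (u s, v s) (1, 0) +
        deriv u s • (deriv u s • F2 (u s, v s) (1, 0) (1, 0) +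
          deriv v s • F2 (u s, v s) (0, 1) (1, 0)) +
      (deriv (deriv v) s • N (u s, v s) (0, 1) +
        deriv v s • (deriv u s • F2 (u s, v s) (1, 0) (0, 1) +
          deriv v s • F2 (u s, v s) (0, 1) (0, 1))) := by
    intro s
    have hA : HasDerivAt (fun s => N (u s, v s))
        (deriv u s • F2 (u s, v s) (1, 0) + deriv v s • F2 (u s, v s) (0, 1)) s :=
      chain2' hNd hud hvd s
    have hA1 : HasDerivAt (fun s => N (u s, v s) (1, 0))
        (deriv u s • F2 (u s, v s) (1, 0) (1, 0) + deriv v s • F2 (u s, v s) (0, 1) (1, 0)) s := by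
      have := hA.clm_apply (hasDerivAt_const s ((1 : ℝ), (0 : ℝ)))
      simpa using this
    have hB1 : HasDerivAt (fun s => N (u s, v s) (0, 1))
        (deriv u s • F2 (u s, v s) (1, 0) (0, 1) + deriv v s • F2 (u s, v s) (0, 1) (0, 1)) s := by
      have := hA.clm_apply (hasDerivAt_const s ((0 : ℝ), (1 : ℝ)))
      simpa using this
    have hu2 : HasDerivAt (deriv u) (deriv (deriv u) s) s := (hu'd s).hasDerivAt
    have hv2 : HasDerivAt (deriv v) (deriv (deriv v) s) s := (hv'd s).hasDerivAt
    have hfun : deriv γ = fun s =>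
        deriv u s • N (u s, v s) (1, 0) + deriv v s • N (u s, v s) (0, 1) := funext hdγ
    rw [hfun, HasDerivAt.deriv (f := fun s =>
        deriv u s • N (u s, v s) (1, 0) + deriv v s • N (u s, v s) (0, 1))
        ((hu2.smul hA1).add (hv2.smul hB1))]
    abel
  -- symmetry of second derivative
  have hsymm : ∀ s, F2 (u s, v s) (1, 0) (0, 1) = F2 (u s, v s) (0, 1) (1, 0) :=
    fun s => symm2' hφ (u s, v s) (1, 0) (0, 1)
  intro s hs
  dsimp only
  -- abbreviations at s
  have hk0 : k s ≠ 0 := ne_of_gt (hkpos s hs)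
  set Pu := φu (u s) (v s) with hPuS
  set Pv := φv (u s) (v s) with hPvS
  set Puu := φuu (u s) (v s) with hPuuS
  set Puv := φuv (u s) (v s) with hPuvS
  set Pvv := φvv (u s) (v s) with hPvvS
  -- vector forms of derivatives
  have htv : t s = deriv u s • Pu + deriv v s • Pv := by
    rw [ht, hdγ s, hPuS, hPvS, hPu, hPv]
  have hγ2v : deriv (deriv γ) s =
      deriv (deriv u) s • Pu + deriv u s • (deriv u s • Puu + deriv v s • Puv) +
      (deriv (deriv v) s • Pv + deriv v s • (deriv u s • Puv + deriv v s • Pvv)) := by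
    rw [hγ2 s, hsymm s, hPuS, hPvS, hPuuS, hPuvS, hPvvS, hPu, hPv, hPuu, hPuv, hPvv]
  -- inner product computations
  have htX : ⟪t s, cross3 Pu Pv⟫ = 0 := by
    rw [htv]
    simp only [inner_add_left, real_inner_smul_left, inner_cross_self_left,
      inner_cross_self_right, mul_zero, add_zero]
  have hγX : ⟪γ s, cross3 Pu Pv⟫ = mu s * ⟪bv s, cross3 Pu Pv⟫ := by
    rw [hrect s hs]
    simp only [inner_add_left, real_inner_smul_left, htX, mul_zero, zero_add]
  have hbX : ⟪bv s, cross3 Pu Pv⟫ = ⟪t s, Pu⟫ * ⟪n s, Pv⟫ - ⟪t s, Pv⟫ * ⟪n s, Pu⟫ := by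
    rw [hb]; exact cross3_quad _ _ _ _
  have htPu : ⟪t s, Pu⟫ = deriv u s * ⟪Pu, Pu⟫ + deriv v s * ⟪Pv, Pu⟫ := by
    rw [htv]; simp only [inner_add_left, real_inner_smul_left]
  have htPv : ⟪t s, Pv⟫ = deriv u s * ⟪Pu, Pv⟫ + deriv v s * ⟪Pv, Pv⟫ := by
    rw [htv]; simp only [inner_add_left, real_inner_smul_left]
  have hnPu : ⟪n s, Pu⟫ = (k s)⁻¹ *
      (deriv (deriv u) s * ⟪Pu, Pu⟫ +
        deriv u s * (deriv u s * ⟪Puu, Pu⟫ + deriv v s * ⟪Puv, Pu⟫) +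
      (deriv (deriv v) s * ⟪Pv, Pu⟫ +
        deriv v s * (deriv u s * ⟪Puv, Pu⟫ + deriv v s * ⟪Pvv, Pu⟫))) := by
    rw [hn, hγ2v]
    simp only [inner_add_left, real_inner_smul_left]
  have hnPv : ⟪n s, Pv⟫ = (k s)⁻¹ *
      (deriv (deriv u) s * ⟪Pu, Pv⟫ +
        deriv u s * (deriv u s * ⟪Puu, Pv⟫ + deriv v s * ⟪Puv, Pv⟫) +
      (deriv (deriv v) s * ⟪Pv, Pv⟫ +
        deriv v s * (deriv u s * ⟪Puv, Pv⟫ + deriv v s * ⟪Pvv, Pv⟫))) := by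
    rw [hn, hγ2v]
    simp only [inner_add_left, real_inner_smul_left]
  rw [hγX, hbX, htPu, htPv, hnPu, hnPv, real_inner_comm Pv Pu, div_eq_mul_inv]
  ring
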